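/- Let γ̂ be the maximum of K i.i.d. exponential random variables with mean c > 0. Then E[log₂(1+γ̂)] = (K/log 2) ∑_{k=0}^{K-1} ((-1)^k/(k+1)) binom(K-1,k) e^{(k+1)/c} Γ(0, (k+1)/c). -/

import Mathlib

open MeasureTheory ProbabilityTheory

section Helpers
open Set Filter Real Topology
open scoped ENNReal NNReal


lemma myInt_log {a : ℝ} (ha : 0 < a) :
    IntegrableOn (fun x => Real.exp (-(a*x)) * Real.log (1+x)) (Ioi (0:ℝ)) := by
  have hmeas : AEStronglyMeasurable (fun x => Real.exp (-(a*x)) * Real.log (1+x))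
      (volume.restrict (Ioi (0:ℝ))) := by
    exact ((Real.measurable_exp.comp (measurable_id.const_mul a).neg).mul
      (Real.measurable_log.comp (measurable_const.add measurable_id))).aestronglyMeasurable
  have hg : IntegrableOn (fun x : ℝ => x ^ (1:ℝ) * Real.exp (-a * x ^ (1:ℝ))) (Ioi 0) :=
    integrableOn_rpow_mul_exp_neg_mul_rpow (by norm_num) one_pos ha
  refine Integrable.mono' hg hmeas ?_
  rw [ae_restrict_iff' measurableSet_Ioi]
  filter_upwards with x hx
  have hx0 : (0:ℝ) < x := hx
  have hlog0 : 0 ≤ Real.log (1+x) := Real.log_nonneg (by linarith)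
  have hlogle : Real.log (1+x) ≤ x := by
    have := Real.log_le_sub_one_of_pos (show (0:ℝ) < 1 + x by linarith)
    linarith
  rw [Real.norm_eq_abs, abs_of_nonneg (mul_nonneg (Real.exp_pos _).le hlog0)]
  simp only [Real.rpow_one]
  calc Real.exp (-(a*x)) * Real.log (1+x) ≤ Real.exp (-(a*x)) * x :=
        mul_le_mul_of_nonneg_left hlogle (Real.exp_pos _).le
    _ = x * Real.exp (-a * x) := by ring_nf

lemma myInt_inv {a : ℝ} (ha : 0 < a) :
    IntegrableOn (fun x => Real.exp (-(a*x)) / (1+x)) (Ioi (0:ℝ)) := by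
  have hmeas : AEStronglyMeasurable (fun x => Real.exp (-(a*x)) / (1+x))
      (volume.restrict (Ioi (0:ℝ))) :=
    ((Real.measurable_exp.comp (measurable_id.const_mul a).neg).div
      (measurable_const.add measurable_id)).aestronglyMeasurable
  refine Integrable.mono' (exp_neg_integrableOn_Ioi 0 ha) hmeas ?_
  rw [ae_restrict_iff' measurableSet_Ioi]
  filter_upwards with x hx
  have hx0 : (0:ℝ) < x := hx
  have h1x : (1:ℝ) ≤ 1 + x := by linarith
  rw [Real.norm_eq_abs, abs_of_nonneg (div_nonneg (Real.exp_pos _).le (by linarith))]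
  rw [neg_mul]
  calc Real.exp (-(a*x)) / (1+x) ≤ Real.exp (-(a*x)) / 1 :=
        div_le_div_of_nonneg_left (Real.exp_pos _).le one_pos h1x
    _ = Real.exp (-(a*x)) := div_one _

lemma myTendsto {a : ℝ} (ha : 0 < a) :
    Tendsto (fun x => Real.exp (-(a*x)) * Real.log (1+x)) atTop (𝓝 0) := by
  have h1 : Tendsto (fun y : ℝ => y * Real.exp (-y)) atTop (𝓝 0) := by
    simpa using Real.tendsto_pow_mul_exp_neg_atTop_nhds_zero 1
  have h2 : Tendsto (fun x : ℝ => a * x) atTop atTop :=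
    Filter.tendsto_id.const_mul_atTop ha
  have h3 : Tendsto (fun x : ℝ => (a*x) * Real.exp (-(a*x))) atTop (𝓝 0) := h1.comp h2
  have h4 : Tendsto (fun x : ℝ => (1/a) * ((a*x) * Real.exp (-(a*x)))) atTop (𝓝 0) := by
    simpa using h3.const_mul (1/a)
  refine squeeze_zero_norm' ?_ (by simpa using h4.norm)
  filter_upwards [eventually_ge_atTop (0:ℝ)] with x hx
  have hlog0 : 0 ≤ Real.log (1+x) := Real.log_nonneg (by linarith)
  have hlogle : Real.log (1+x) ≤ x := by
    have := Real.log_le_sub_one_of_pos (show (0:ℝ) < 1 + x by linarith)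
    linarith
  simp only [Real.norm_eq_abs, abs_mul, abs_of_pos ha, abs_of_nonneg hx, abs_inv,
    abs_of_nonneg (Real.exp_pos (-(a*x))).le, abs_of_nonneg hlog0,
    abs_of_nonneg (Real.exp_pos _).le, one_div]
  have heq : a⁻¹ * (a * x * Real.exp (-(a*x))) = x * Real.exp (-(a*x)) := by
    field_simp
  rw [heq]
  calc Real.exp (-(a*x)) * Real.log (1+x) ≤ Real.exp (-(a*x)) * x :=
        mul_le_mul_of_nonneg_left hlogle (Real.exp_pos _).le
    _ = x * Real.exp (-(a*x)) := mul_comm _ _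

lemma myParts {a : ℝ} (ha : 0 < a) :
    ∫ x in Ioi (0:ℝ), Real.exp (-(a*x)) * Real.log (1+x)
      = (1/a) * ∫ x in Ioi (0:ℝ), Real.exp (-(a*x)) / (1+x) := by
  set F : ℝ → ℝ := fun x => -(1/a) * Real.exp (-(a*x)) * Real.log (1+x) with hF
  set f' : ℝ → ℝ := fun x =>
    Real.exp (-(a*x)) * Real.log (1+x) - (1/a) * (Real.exp (-(a*x)) / (1+x)) with hf'
  have hderiv : ∀ x ∈ Ici (0:ℝ), HasDerivAt F (f' x) x := by
    intro x hx
    have hx0 : (0:ℝ) ≤ x := hx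
    have h1x : (0:ℝ) < 1 + x := by linarith
    have he : HasDerivAt (fun x : ℝ => Real.exp (-(a*x))) (-a * Real.exp (-(a*x))) x := by
      have : HasDerivAt (fun x : ℝ => -(a*x)) (-a) x := by
        simpa [neg_mul] using (hasDerivAt_id x).const_mul (-a)
      simpa [mul_comm] using this.exp
    have hl : HasDerivAt (fun x : ℝ => Real.log (1+x)) (1/(1+x)) x := by
      have : HasDerivAt (fun x : ℝ => 1 + x) 1 x := by
        simpa using (hasDerivAt_id x).const_add 1
      simpa [one_div] using this.log h1x.ne'
    have := ((he.const_mul (-(1/a))).mul hl)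
    refine HasDerivAt.congr_deriv this ?_
    simp only [hf']
    field_simp
    ring
  have hint : IntegrableOn f' (Ioi (0:ℝ)) :=
    (myInt_log ha).sub ((myInt_inv ha).const_mul (1/a))
  have htend : Tendsto F atTop (𝓝 0) := by
    have := (myTendsto ha).const_mul (-(1/a))
    simpa [hF, mul_assoc] using this
  have hFTC := integral_Ioi_of_hasDerivAt_of_tendsto' hderiv hint htend
  have hF0 : F 0 = 0 := by simp [hF]
  rw [hF0, sub_zero] at hFTC
  have hsplit : ∫ x in Ioi (0:ℝ), f' x
      = (∫ x in Ioi (0:ℝ), Real.exp (-(a*x)) * Real.log (1+x))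
        - (1/a) * ∫ x in Ioi (0:ℝ), Real.exp (-(a*x)) / (1+x) := by
    rw [integral_sub (myInt_log ha) ((myInt_inv ha).const_mul (1/a)),
      integral_const_mul]
  rw [hsplit] at hFTC
  linarith

lemma mySubst {a : ℝ} (ha : 0 < a) :
    ∫ s in Ioi a, Real.exp (-s) / s
      = Real.exp (-a) * ∫ x in Ioi (0:ℝ), Real.exp (-(a*x)) / (1+x) := by
  have himg : (fun x : ℝ => a * x + a) '' Ioi 0 = Ioi a := by
    ext y
    simp only [mem_image, mem_Ioi]
    constructor
    · rintro ⟨x, hx, rfl⟩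
      nlinarith
    · intro hy
      refine ⟨(y - a) / a, div_pos (by linarith) ha, ?_⟩
      field_simp
      ring
  have hderiv : ∀ x ∈ Ioi (0:ℝ), HasDerivWithinAt (fun x : ℝ => a * x + a) a (Ioi 0) x := by
    intro x _
    simpa using (((hasDerivAt_id x).const_mul a).add_const a).hasDerivWithinAt
  have hinj : InjOn (fun x : ℝ => a * x + a) (Ioi 0) := by
    intro x _ y _ h
    simp only at h
    have := mul_left_cancel₀ ha.ne' (by linarith : a * x = a * y)
    exact this
  have := integral_image_eq_integral_abs_deriv_smul measurableSet_Ioi hderiv hinj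
    (fun s => Real.exp (-s) / s)
  rw [himg] at this
  rw [this, ← integral_const_mul]
  refine setIntegral_congr_fun measurableSet_Ioi fun x hx => ?_
  have hx0 : (0:ℝ) < x := hx
  have h1x : (0:ℝ) < 1 + x := by linarith
  rw [smul_eq_mul, abs_of_pos ha]
  rw [show -(a * x + a) = -(a*x) + (-a) by ring, Real.exp_add]
  field_simp
  ring

lemma myKey {a : ℝ} (ha : 0 < a) :
    ∫ x in Ioi (0:ℝ), Real.exp (-(a*x)) * Real.log (1+x)
      = (1/a) * Real.exp a * ∫ s in Ioi a, Real.exp (-s) / s := by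
  rw [myParts ha, mySubst ha, ← mul_assoc]
  rw [show (1/a) * Real.exp a * Real.exp (-a) = 1/a by
    rw [mul_assoc, ← Real.exp_add]; simp]


end Helpers

open Set Filter Real Topology
open scoped ENNReal NNReal

/-- If γ̂ is the maximum of K i.i.d. exponential random variables with mean
`c > 0`, then `E[log₂(1+γ̂)] = (K/log 2) ∑_{k=0}^{K-1} ((-1)^k/(k+1)) C(K-1,k) e^{(k+1)/c}
Γ(0,(k+1)/c)`, with `Γ(0,t) = ∫_t^∞ e^{-s}/s ds`. -/
theorem expected_log_max_iid_exponential
    {Ω : Type*} [MeasurableSpace Ω] (μ : Measure Ω) [IsProbabilityMeasure μ]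
    (K : ℕ) (hK : NeZero K) (c : ℝ) (hc : 0 < c)
    (γ : Fin K → Ω → ℝ) (hmeas : ∀ k, Measurable (γ k))
    (hindep : iIndepFun γ μ)
    (hcdf : ∀ k, ∀ x : ℝ, 0 ≤ x →
      μ {ω | γ k ω ≤ x} = ENNReal.ofReal (1 - Real.exp (-x / c))) :
    ∫ ω, Real.logb 2 (1 + ⨆ k : Fin K, γ k ω) ∂μ =
      (K / Real.log 2) * ∑ k ∈ Finset.range K,
        ((-1 : ℝ) ^ k / (k + 1)) * (Nat.choose (K - 1) k) *
          Real.exp ((k + 1) / c) * ∫ s in Set.Ioi ((k + 1 : ℝ) / c), Real.exp (-s) / s := by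
  obtain ⟨n, rfl⟩ : ∃ n, K = n + 1 := ⟨K - 1, (Nat.succ_pred_eq_of_ne_zero hK.out).symm⟩
  set X : Ω → ℝ := fun ω => ⨆ k : Fin (n+1), γ k ω with hXdef
  have hXm : Measurable X := Measurable.iSup (fun k => hmeas k)
  -- CDF of the max for nonnegative x
  have hcdf0 : ∀ x : ℝ, 0 ≤ x →
      μ {ω | X ω ≤ x} = ENNReal.ofReal ((1 - Real.exp (-x/c))^(n+1)) := by
    intro x hx
    have hset : {ω | X ω ≤ x} = ⋂ k, {ω | γ k ω ≤ x} := by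
      ext ω
      simp only [mem_setOf_eq, mem_iInter, hXdef]
      exact ciSup_le_iff (Set.finite_range _).bddAbove
    have hnn : 0 ≤ 1 - Real.exp (-x/c) := by
      have : Real.exp (-x/c) ≤ Real.exp 0 :=
        Real.exp_le_exp.2 (by rw [neg_div]; simpa using div_nonneg hx hc.le)
      simp only [Real.exp_zero] at this
      linarith
    rw [hset, hindep.meas_iInter (s := fun k => {ω | γ k ω ≤ x})
      (fun k => ⟨Set.Iic x, measurableSet_Iic, rfl⟩)]
    simp only [hcdf _ x hx]
    rw [Finset.prod_const, Finset.card_univ, Fintype.card_fin, ← ENNReal.ofReal_pow hnn]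
  have hcdfneg : ∀ x : ℝ, x < 0 → μ {ω | X ω ≤ x} = 0 := by
    intro x hx
    have h0 : μ {ω | γ 0 ω ≤ (0:ℝ)} = 0 := by
      rw [hcdf 0 0 le_rfl]; simp
    refine measure_mono_null ?_ h0
    intro ω hω
    have h1 : γ 0 ω ≤ X ω := le_ciSup (f := fun k : Fin (n+1) => γ k ω) (Set.finite_range _).bddAbove 0
    have h2 : X ω ≤ x := hω
    simp only [mem_setOf_eq]
    linarith
  -- the density of the max
  set f0 : ℝ → ℝ := fun x => ((n+1:ℝ)/c) * Real.exp (-x/c) * (1 - Real.exp (-x/c))^n with hf0def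
  have hf0cont : Continuous f0 := by fun_prop
  have hG : ∀ x : ℝ, HasDerivAt (fun y => (1 - Real.exp (-y/c))^(n+1)) (f0 x) x := by
    intro x
    have h1 : HasDerivAt (fun y : ℝ => 1 - Real.exp (-y/c)) (Real.exp (-x/c)/c) x := by
      have h2 : HasDerivAt (fun y : ℝ => -y/c) (-1/c) x := by
        exact (hasDerivAt_neg x).div_const c
      have h3 := h2.exp
      have h4 := h3.const_sub 1
      refine h4.congr_deriv ?_
      ring
    have := h1.pow (n+1)
    refine HasDerivAt.congr_deriv this ?_
    simp only [Nat.add_sub_cancel]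
    push_cast
    ring
  set ν : Measure ℝ :=
    volume.withDensity (fun x => ENNReal.ofReal (Set.indicator (Ioi 0) f0 x)) with hνdef
  have hf0nn : ∀ x : ℝ, 0 ≤ x → 0 ≤ f0 x := by
    intro x hx
    have : Real.exp (-x/c) ≤ 1 := by
      rw [show (1:ℝ) = Real.exp 0 by simp]
      exact Real.exp_le_exp.2 (by rw [neg_div]; simpa using div_nonneg hx hc.le)
    have h1 : (0:ℝ) ≤ 1 - Real.exp (-x/c) := by linarith
    exact mul_nonneg (mul_nonneg (by positivity) (Real.exp_pos _).le) (pow_nonneg h1 n)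
  haveI : IsProbabilityMeasure (Measure.map X μ) := Measure.isProbabilityMeasure_map hXm.aemeasurable
  have hmap : Measure.map X μ = ν := by
    refine Measure.ext_of_Iic _ _ (fun t => ?_)
    rw [Measure.map_apply hXm measurableSet_Iic]
    have hpre : X ⁻¹' Iic t = {ω | X ω ≤ t} := rfl
    have hindfun : (fun x => ENNReal.ofReal (Set.indicator (Ioi 0) f0 x))
        = Set.indicator (Ioi 0) (fun x => ENNReal.ofReal (f0 x)) := by
      funext x
      by_cases hx : x ∈ Ioi 0 <;> simp [hx]
    rw [hpre, hνdef, withDensity_apply _ measurableSet_Iic, hindfun,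
      lintegral_indicator measurableSet_Ioi _,
      Measure.restrict_restrict measurableSet_Ioi, Set.Ioi_inter_Iic]
    by_cases ht : 0 ≤ t
    · have hint : IntegrableOn f0 (Ioc 0 t) := hf0cont.integrableOn_Ioc
      have hae : 0 ≤ᵐ[volume.restrict (Ioc 0 t)] f0 :=
        (ae_restrict_iff' measurableSet_Ioc).2
          (Eventually.of_forall fun x hx => hf0nn x hx.1.le)
      rw [← ofReal_integral_eq_lintegral_ofReal hint hae, hcdf0 t ht]
      congr 1
      rw [← intervalIntegral.integral_of_le ht]
      have hFTC := intervalIntegral.integral_eq_sub_of_hasDerivAt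
        (f := fun y => (1 - Real.exp (-y/c))^(n+1)) (fun x _ => hG x)
        (hf0cont.intervalIntegrable 0 t)
      rw [hFTC]
      simp
    · push_neg at ht
      rw [Set.Ioc_eq_empty (by linarith), Measure.restrict_empty, lintegral_zero_measure,
        hcdfneg t ht]
  -- transfer the integral to the density representation
  have hgm : Measurable (fun x : ℝ => Real.logb 2 (1+x)) :=
    (Real.measurable_log.comp (measurable_const.add measurable_id)).div_const _
  have hXapp : ∀ ω, (⨆ k : Fin (n+1), γ k ω) = X ω := fun ω => rfl
  have hstep1 : ∫ ω, Real.logb 2 (1 + X ω) ∂μ = ∫ x, Real.logb 2 (1+x) ∂ν := by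
    rw [← hmap, integral_map hXm.aemeasurable hgm.aestronglyMeasurable]
  have hstep2 : ∫ x, Real.logb 2 (1+x) ∂ν
      = ∫ x in Ioi (0:ℝ), f0 x * Real.logb 2 (1+x) := by
    have hd : Measurable (fun x => (Set.indicator (Ioi 0) f0 x).toNNReal) :=
      (hf0cont.measurable.indicator measurableSet_Ioi).real_toNNReal
    rw [hνdef]
    rw [show (fun x => ENNReal.ofReal (Set.indicator (Ioi 0) f0 x))
        = (fun x => ((Set.indicator (Ioi 0) f0 x).toNNReal : ℝ≥0∞)) from rfl]
    rw [integral_withDensity_eq_integral_smul hd]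
    rw [← integral_indicator measurableSet_Ioi]
    congr 1
    funext x
    by_cases hx : x ∈ Ioi 0
    · simp only [Set.indicator_of_mem hx, NNReal.smul_def,
        Real.coe_toNNReal _ (hf0nn x (le_of_lt hx)), smul_eq_mul]
    · simp [Set.indicator_of_notMem hx]
  -- binomial expansion of the integrand
  set a : ℕ → ℝ := fun k => ((k:ℝ)+1)/c with hadef
  have ha : ∀ k : ℕ, 0 < a k := fun k => by
    simp only [hadef]; positivity
  set hterm : ℕ → ℝ → ℝ := fun k x =>
    ((-1:ℝ)^k * (n.choose k) * ((n+1:ℝ)/c) / Real.log 2) *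
      (Real.exp (-(a k * x)) * Real.log (1+x)) with htermdef
  have hexpand : ∀ x : ℝ, f0 x * Real.logb 2 (1+x)
      = ∑ k ∈ Finset.range (n+1), hterm k x := by
    intro x
    have hexp : (1 - Real.exp (-x/c))^n
        = ∑ k ∈ Finset.range (n+1),
            (-1:ℝ)^k * (n.choose k) * Real.exp ((k:ℝ) * (-x/c)) := by
      rw [show (1 - Real.exp (-x/c)) = -(Real.exp (-x/c)) + 1 by ring, add_pow]
      refine Finset.sum_congr rfl fun k _ => ?_
      rw [one_pow, mul_one, neg_pow, ← Real.exp_nat_mul]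
      ring
    simp only [htermdef, hf0def, Real.logb]
    rw [hexp, Finset.mul_sum, Finset.sum_mul]
    refine Finset.sum_congr rfl fun k _ => ?_
    have hme : Real.exp (-x/c) * Real.exp ((k:ℝ) * (-x/c)) = Real.exp (-(a k * x)) := by
      rw [← Real.exp_add]
      congr 1
      simp only [hadef]
      ring
    rw [← hme]
    ring
  have hintk : ∀ k ∈ Finset.range (n+1), IntegrableOn (fun x => hterm k x) (Ioi (0:ℝ)) :=
    fun k _ => (myInt_log (ha k)).const_mul _
  have hsum : ∫ x in Ioi (0:ℝ), f0 x * Real.logb 2 (1+x)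
      = ∑ k ∈ Finset.range (n+1), ∫ x in Ioi (0:ℝ), hterm k x := by
    simp only [hexpand]
    exact integral_finset_sum _ hintk
  have hval : ∀ k ∈ Finset.range (n+1), ∫ x in Ioi (0:ℝ), hterm k x
      = ((-1:ℝ)^k * (n.choose k) * ((n+1:ℝ)/c) / Real.log 2) *
        ((1/(a k)) * Real.exp (a k) * ∫ s in Ioi (a k), Real.exp (-s)/s) := by
    intro k _
    simp only [htermdef]
    rw [integral_const_mul, myKey (ha k)]
  -- put everything together
  have hlog2 : Real.log 2 ≠ 0 := (Real.log_pos (by norm_num)).ne'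
  simp only [hXapp]
  rw [hstep1, hstep2, hsum, Finset.sum_congr rfl hval]
  simp only [Nat.add_sub_cancel]
  rw [Finset.mul_sum]
  refine Finset.sum_congr rfl fun k _ => ?_
  have hk1 : ((k:ℝ)+1) ≠ 0 := by positivity
  simp only [hadef, one_div_div]
  push_cast
  field_simp
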